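/- Suppose v̂ ∈ ℝᵐ is a centered point for parameter μ > 0. Then for all v ∈ ℝᵐ, the Newton direction d = d(v,μ) satisfies ‖d‖² ≤ h(v̂, v)·(1 + ‖d‖). -/

import Mathlib

open Matrix

/-- Elementwise exponentiation `e^v` of a vector. -/
noncomputable def expV {m : ℕ} (v : Fin m → ℝ) : Fin m → ℝ := fun i => Real.exp (v i)

/-- The log-domain Newton system: `(d, x)` satisfies
`√μ·Aᵀ(eᵛ + eᵛ∘d) = Wx + c` and `√μ·(e^{−v} − e^{−v}∘d) = Ax + b`. -/
noncomputable def IsNewton {m n : ℕ} (A : Matrix (Fin m) (Fin n) ℝ) (b : Fin m → ℝ)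
    (c : Fin n → ℝ) (W : Matrix (Fin n) (Fin n) ℝ) (μ : ℝ) (v d : Fin m → ℝ)
    (x : Fin n → ℝ) : Prop :=
  Real.sqrt μ • (Aᵀ).mulVec (expV v + expV v * d) = W.mulVec x + c ∧
  Real.sqrt μ • (expV (-v) - expV (-v) * d) = A.mulVec x + b

/-- `v` is a centered point for parameter `μ`, witnessed by `x`:
`√μ·Aᵀeᵛ = Wx + c` and `√μ·e^{−v} = Ax + b`. -/
noncomputable def IsCentered {m n : ℕ} (A : Matrix (Fin m) (Fin n) ℝ) (b : Fin m → ℝ)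
    (c : Fin n → ℝ) (W : Matrix (Fin n) (Fin n) ℝ) (μ : ℝ) (v : Fin m → ℝ)
    (x : Fin n → ℝ) : Prop :=
  Real.sqrt μ • (Aᵀ).mulVec (expV v) = W.mulVec x + c ∧
  Real.sqrt μ • expV (-v) = A.mulVec x + b

/-- The divergence `h(u,v) := ⟨eᵘ, e^{−v}⟩ + ⟨e^{−u}, eᵛ⟩ − 2m`. -/
noncomputable def diverg {m : ℕ} (u v : Fin m → ℝ) : ℝ :=
  (∑ i, Real.exp (u i) * Real.exp (-v i)) + (∑ i, Real.exp (-u i) * Real.exp (v i))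
    - 2 * m

/-- The Euclidean norm of a vector in `ℝᵐ`. -/
noncomputable def enorm' {m : ℕ} (d : Fin m → ℝ) : ℝ := Real.sqrt (∑ i, d i ^ 2)

/-!
Subtracting the centrality equations from the Newton equations gives residuals
`p = e^{-v} - e^{-v}∘d - e^{-v̂}` and `q = eᵛ + eᵛ∘d - e^{v̂}` with `√μ·Aᵀq = Wy` and `√μ·p = Ay`
for `y = x - x̂`, so `μ⟨p, q⟩ = ⟨y, Wy⟩ ≥ 0`. Coordinatewise, with `a = v̂ - v`,
`pᵢqᵢ = -dᵢ² - 2(cosh aᵢ - 1) + 2dᵢ sinh aᵢ`, so `‖d‖² + h ≤ ⟨d, 2 sinh a⟩ ≤ ‖d‖·√(h² + 4h)`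
by Cauchy–Schwarz, where `h = h(v̂, v) = ∑ hᵢ` with `hᵢ = 2(cosh aᵢ - 1) ≥ 0` and
`(2 sinh aᵢ)² = hᵢ² + 4hᵢ`. Squaring yields
`(‖d‖² - h)² ≤ (‖d‖h)²`, i.e. `‖d‖² ≤ h(1 + ‖d‖)`.
-/

open Finset Real

lemma dotProduct_nonneg_of_smul_mulVec_eq {ι κ : Type*} [Fintype ι] [Fintype κ]
    {A : Matrix ι κ ℝ} {W : Matrix κ κ ℝ} (hW : W.PosSemidef) {s : ℝ} (hs : s ≠ 0)
    {p q : ι → ℝ} {y : κ → ℝ} (hq : s • Aᵀ *ᵥ q = W *ᵥ y) (hp : s • p = A *ᵥ y) :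
    0 ≤ p ⬝ᵥ q := by
  have hWy : s ^ 2 * (p ⬝ᵥ q) = y ⬝ᵥ W *ᵥ y := by
    rw [← hq, dotProduct_smul, dotProduct_mulVec, vecMul_transpose, ← hp, smul_dotProduct,
      smul_eq_mul, smul_eq_mul]
    ring
  have := hW.dotProduct_mulVec_nonneg y
  simp only [star_trivial] at this
  exact nonneg_of_mul_nonneg_right (hWy ▸ this) (by positivity)

lemma two_mul_sinh_sq (a : ℝ) :
    (2 * sinh a) ^ 2 = (2 * (cosh a - 1)) ^ 2 + 4 * (2 * (cosh a - 1)) := by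
  linear_combination (-4 : ℝ) * cosh_sq a

lemma diverg_eq_sum_cosh {m : ℕ} (u v : Fin m → ℝ) :
    diverg u v = ∑ i, 2 * (cosh (u i - v i) - 1) := by
  have hexp : ∀ i, exp (u i) * exp (-v i) + exp (-u i) * exp (v i) = 2 * cosh (u i - v i) :=
    fun i => by rw [cosh_eq, ← exp_add, ← exp_add]; ring_nf
  simp only [diverg, ← sum_add_distrib, hexp, mul_sub, sum_sub_distrib, sum_const, card_univ,
    Fintype.card_fin, nsmul_eq_mul, mul_one, mul_comm (m : ℝ)]

lemma diverg_nonneg {m : ℕ} (u v : Fin m → ℝ) : 0 ≤ diverg u v := by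
  rw [diverg_eq_sum_cosh]
  exact sum_nonneg fun i _ => by linarith [one_le_cosh (u i - v i)]

lemma enorm'_sq {m : ℕ} (d : Fin m → ℝ) : enorm' d ^ 2 = ∑ i, d i ^ 2 :=
  sq_sqrt (sum_nonneg fun _ _ => sq_nonneg _)

lemma residual_mul_residual (u v d : ℝ) :
    (exp (-v) - exp (-v) * d - exp (-u)) * (exp v + exp v * d - exp u)
      = -d ^ 2 - 2 * (cosh (u - v) - 1) + d * (2 * sinh (u - v)) := by
  rw [cosh_eq, sinh_eq]
  have hv : exp v * exp (-v) = 1 := by rw [← exp_add, add_neg_cancel, exp_zero]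
  have hu : exp u * exp (-u) = 1 := by rw [← exp_add, add_neg_cancel, exp_zero]
  have e1 : exp (u - v) = exp u * exp (-v) := by rw [← exp_add, sub_eq_add_neg]
  have e2 : exp (-(u - v)) = exp v * exp (-u) := by rw [← exp_add, neg_sub, sub_eq_add_neg]
  rw [e1, e2]
  linear_combination (1 - d ^ 2) * hv + hu

lemma residual_dotProduct_residual {m : ℕ} (u v d : Fin m → ℝ) :
    (expV (-v) - expV (-v) * d - expV (-u)) ⬝ᵥ (expV v + expV v * d - expV u)
      = -enorm' d ^ 2 - diverg u v + ∑ i, d i * (2 * sinh (u i - v i)) := by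
  simp only [dotProduct, Pi.sub_apply, Pi.add_apply, Pi.mul_apply, Pi.neg_apply, expV,
    residual_mul_residual, enorm'_sq, diverg_eq_sum_cosh, sum_add_distrib, sum_sub_distrib,
    sum_neg_distrib]

lemma sum_mul_two_mul_sinh_sq_le {m : ℕ} (u v d : Fin m → ℝ) :
    (∑ i, d i * (2 * sinh (u i - v i))) ^ 2
      ≤ enorm' d ^ 2 * (diverg u v ^ 2 + 4 * diverg u v) := by
  have hcosh : ∀ i, 0 ≤ 2 * (cosh (u i - v i) - 1) :=
    fun i => by linarith [one_le_cosh (u i - v i)]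
  calc (∑ i, d i * (2 * sinh (u i - v i))) ^ 2
      ≤ (∑ i, d i ^ 2) * ∑ i, (2 * sinh (u i - v i)) ^ 2 := sum_mul_sq_le_sq_mul_sq _ _ _
    _ = enorm' d ^ 2 * ((∑ i, (2 * (cosh (u i - v i) - 1)) ^ 2) + 4 * diverg u v) := by
      simp only [enorm'_sq, two_mul_sinh_sq, sum_add_distrib, ← mul_sum, diverg_eq_sum_cosh]
    _ ≤ enorm' d ^ 2 * (diverg u v ^ 2 + 4 * diverg u v) := by
      gcongr
      rw [diverg_eq_sum_cosh]
      exact sum_sq_le_sq_sum_of_nonneg fun i _ => hcosh i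

lemma sq_le_mul_one_add_of_sq_add_le {E H S : ℝ} (hE : 0 ≤ E) (hH : 0 ≤ H) (hS : E ^ 2 + H ≤ S)
    (hS2 : S ^ 2 ≤ E ^ 2 * (H ^ 2 + 4 * H)) : E ^ 2 ≤ H * (1 + E) := by
  have hsq : (E ^ 2 - H) ^ 2 ≤ (E * H) ^ 2 := by
    nlinarith [pow_le_pow_left₀ (by positivity) hS 2]
  linarith [(abs_le.mp (abs_le_of_sq_le_sq hsq (by positivity))).2]

theorem stmt_9_general {m n : ℕ} (A : Matrix (Fin m) (Fin n) ℝ) (b : Fin m → ℝ) (c : Fin n → ℝ)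
    (W : Matrix (Fin n) (Fin n) ℝ) (hW : W.PosSemidef)
    (μ : ℝ) (hμ : 0 < μ) (vhat : Fin m → ℝ) (xhat : Fin n → ℝ)
    (hcent : IsCentered A b c W μ vhat xhat)
    (v d : Fin m → ℝ) (x : Fin n → ℝ) (hd : IsNewton A b c W μ v d x) :
    enorm' d ^ 2 ≤ diverg vhat v * (1 + enorm' d) := by
  obtain ⟨hc1, hc2⟩ := hcent
  obtain ⟨hn1, hn2⟩ := hd
  have hpq := dotProduct_nonneg_of_smul_mulVec_eq hW (sqrt_ne_zero'.mpr hμ) (y := x - xhat)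
    (p := expV (-v) - expV (-v) * d - expV (-vhat)) (q := expV v + expV v * d - expV vhat)
    (by rw [mulVec_sub, smul_sub, hn1, hc1, mulVec_sub]; abel)
    (by rw [smul_sub, hn2, hc2, mulVec_sub]; abel)
  rw [residual_dotProduct_residual] at hpq
  exact sq_le_mul_one_add_of_sq_add_le (sqrt_nonneg _) (diverg_nonneg vhat v) (by linarith)
    (sum_mul_two_mul_sinh_sq_le vhat v d)

/-- if `v̂` is centered for `μ > 0`, then for every `v` the Newton
direction `d = d(v,μ)` satisfies `‖d‖² ≤ h(v̂,v)·(1 + ‖d‖)` (Euclidean norm). -/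
theorem stmt_9 {m n : ℕ} (A : Matrix (Fin m) (Fin n) ℝ) (b : Fin m → ℝ) (c : Fin n → ℝ)
    (W : Matrix (Fin n) (Fin n) ℝ) (hW : W.PosSemidef) (hAW : (Aᵀ * A + W).PosDef)
    (μ : ℝ) (hμ : 0 < μ) (vhat : Fin m → ℝ) (xhat : Fin n → ℝ)
    (hcent : IsCentered A b c W μ vhat xhat)
    (v d : Fin m → ℝ) (x : Fin n → ℝ) (hd : IsNewton A b c W μ v d x) :
    enorm' d ^ 2 ≤ diverg vhat v * (1 + enorm' d) :=
  stmt_9_general A b c W hW μ hμ vhat xhat hcent v d x hd
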